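/- For the fair-coin measure λ on Cantor space, let x̄_ℓ = (1/ℓ) ∑_{k=0}^{ℓ-1} x_k denote the running frequency of 1s, and let f(x) = sup_ℓ x̄_ℓ. Then for every n ∈ ℕ there exists m ∈ ℕ such that λ{ x : sup_{ℓ < m, ℓ ≥ 1} x̄_ℓ = sup_{ℓ ≥ 1} x̄_ℓ } > 1 − 2^{-n}. -/

import Mathlib

/-!
Both `μ` and the product of fair coins are determined by their values on cylinders, so `μ` is the
product measure. By the strong law of large numbers the running frequencies tend to `1/2` almost
surely, and by recurrence of the simple random walk `∑ (2 x_k - 1)` some running frequency exceeds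
`1/2` almost surely: the probability that the walk stays below level `c` is, by conditioning on the
first bit, a bounded harmonic function of `c ∈ ℕ` vanishing at `0`, hence zero. A sequence tending
to `1/2` with a term above `1/2` attains its maximum, so almost surely the supremum is attained at
a finite index, and continuity of measure from below yields `m`.
-/

open MeasureTheory
open scoped ENNReal

/-- The cylinder set determined by a finite binary string. -/
def cyl (σ : List Bool) : Set (ℕ → Bool) :=
  {x | ∀ i : Fin σ.length, x i = σ.get i}

/-- `avg x ℓ` is the frequency of `1`s among the first `ℓ` bits of `x`. -/
noncomputable def avg (x : ℕ → Bool) (ℓ : ℕ) : ℝ :=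
  (∑ k ∈ Finset.range ℓ, if x k then (1:ℝ) else 0) / ℓ

open ProbabilityTheory Filter Topology

lemma mem_cyl_iff {σ : List Bool} {x : ℕ → Bool} :
    x ∈ cyl σ ↔ ∀ i (hi : i < σ.length), x i = σ[i] :=
  ⟨fun h i hi => h ⟨i, hi⟩, fun h i => h i i.isLt⟩

lemma mem_cyl_ofFn (x : ℕ → Bool) (n : ℕ) : x ∈ cyl (List.ofFn fun i : Fin n => x i) := by
  simp [mem_cyl_iff]

lemma cyl_subset_cyl_of_mem {σ τ : List Bool} {x : ℕ → Bool} (hσ : x ∈ cyl σ) (hτ : x ∈ cyl τ)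
    (hlen : σ.length ≤ τ.length) : cyl τ ⊆ cyl σ := by
  intro y hy
  rw [mem_cyl_iff] at hσ hτ hy ⊢
  intro i hi
  rw [hy i (hi.trans_le hlen), ← hτ i (hi.trans_le hlen), hσ i hi]

lemma measurableSet_cyl (σ : List Bool) : MeasurableSet (cyl σ) := by
  rw [show cyl σ = ⋂ i : Fin σ.length, {x | x i = σ.get i} by ext; simp [cyl]]
  exact .iInter fun i => measurableSet_eq_fun (measurable_pi_apply _) measurable_const

lemma isPiSystem_cyl : IsPiSystem (Set.range cyl) := by
  rintro _ ⟨σ, rfl⟩ _ ⟨τ, rfl⟩ ⟨x, hσ, hτ⟩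
  rcases le_total σ.length τ.length with h | h
  · exact ⟨τ, (Set.inter_eq_right.2 (cyl_subset_cyl_of_mem hσ hτ h)).symm⟩
  · exact ⟨σ, (Set.inter_eq_left.2 (cyl_subset_cyl_of_mem hτ hσ h)).symm⟩

lemma setOf_apply_eq_iUnion_cyl (i : ℕ) (b : Bool) :
    {x : ℕ → Bool | x i = b} = ⋃ σ : {σ : List Bool // σ[i]? = some b}, cyl σ := by
  ext x
  simp only [Set.mem_ofPred_eq, Set.mem_iUnion, Subtype.exists, exists_prop]
  constructor
  · rintro rfl
    exact ⟨_, by simp only [List.getElem?_ofFn]; simp, mem_cyl_ofFn x (i + 1)⟩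
  · rintro ⟨σ, hσ, hx⟩
    obtain ⟨hi, rfl⟩ := List.getElem?_eq_some_iff.1 hσ
    exact mem_cyl_iff.1 hx i hi

lemma measurableSpace_eq_generateFrom_cyl :
    (MeasurableSpace.pi : MeasurableSpace (ℕ → Bool)) =
      MeasurableSpace.generateFrom (Set.range cyl) := by
  refine le_antisymm (iSup_le fun i => Measurable.comap_le ?_) ?_
  · refine @measurable_to_countable' _ _ _ _ (.generateFrom _) _ fun b => ?_
    rw [show (fun x : ℕ → Bool => x i) ⁻¹' {b} = {x | x i = b} from rfl,
      setOf_apply_eq_iUnion_cyl]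
    exact .iUnion fun σ => MeasurableSpace.measurableSet_generateFrom ⟨σ, rfl⟩
  · exact MeasurableSpace.generateFrom_le <| Set.forall_mem_range.2 measurableSet_cyl

lemma measure_ext_of_cyl {μ ν : Measure (ℕ → Bool)} [IsFiniteMeasure μ]
    (h : ∀ σ, μ (cyl σ) = ν (cyl σ)) : μ = ν := by
  refine ext_of_generate_finite _ measurableSpace_eq_generateFrom_cyl isPiSystem_cyl
    (Set.forall_mem_range.2 h) ?_
  simpa [cyl] using h []

noncomputable def fairCoin : Measure (ℕ → Bool) :=
  Measure.infinitePi fun _ => (PMF.uniformOfFintype Bool).toMeasure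

instance : IsProbabilityMeasure fairCoin := by
  unfold fairCoin; infer_instance

lemma cyl_eq_pi (σ : List Bool) :
    cyl σ = Set.pi (Finset.range σ.length : Set ℕ) fun i => {σ.getD i false} := by
  ext x
  simp only [mem_cyl_iff, Set.mem_pi, Finset.coe_range, Set.mem_Iio, Set.mem_singleton_iff]
  exact forall₂_congr fun i hi => by rw [List.getD_eq_getElem _ _ hi]

lemma fairCoin_cyl (σ : List Bool) : fairCoin (cyl σ) = 2⁻¹ ^ σ.length := by
  rw [cyl_eq_pi, fairCoin, Measure.infinitePi_pi]
  · simp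
  · exact fun _ _ => measurableSet_singleton _

lemma eq_fairCoin_of_cyl {μ : Measure (ℕ → Bool)}
    (hμ : ∀ σ : List Bool, μ (cyl σ) = 2⁻¹ ^ σ.length) : μ = fairCoin :=
  (measure_ext_of_cyl fun σ => by rw [hμ, fairCoin_cyl]).symm

def prepend (b : Bool) (y : ℕ → Bool) : ℕ → Bool
  | 0 => b
  | n + 1 => y n

@[fun_prop]
lemma measurable_prepend (b : Bool) : Measurable (prepend b) :=
  measurable_pi_lambda _ fun n => by
    cases n
    exacts [measurable_const, measurable_pi_apply _]

lemma prepend_mem_cyl_cons {b c : Bool} {y : ℕ → Bool} {τ : List Bool} :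
    prepend b y ∈ cyl (c :: τ) ↔ b = c ∧ y ∈ cyl τ := by
  simp only [mem_cyl_iff, List.length_cons, Nat.forall_lt_succ_left', List.getElem_cons_zero,
    List.getElem_cons_succ]
  rfl

lemma fairCoin_eq_smul_map_prepend :
    fairCoin = (2⁻¹ : ℝ≥0∞) • (fairCoin.map (prepend false) + fairCoin.map (prepend true)) := by
  refine measure_ext_of_cyl fun σ => ?_
  rcases σ with _ | ⟨c, τ⟩
  · simp [cyl_eq_pi, Measure.map_apply (measurable_prepend _) MeasurableSet.univ,
      ENNReal.inv_two_add_inv_two]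
  · have (b : Bool) : prepend b ⁻¹' cyl (c :: τ) = if b = c then cyl τ else ∅ := by
      ext y; split_ifs <;> simp [prepend_mem_cyl_cons, *]
    rw [Measure.smul_apply, Measure.add_apply,
      Measure.map_apply (by fun_prop) (measurableSet_cyl _),
      Measure.map_apply (by fun_prop) (measurableSet_cyl _), this, this]
    cases c <;> simp [fairCoin_cyl, pow_succ']

lemma eq_zero_of_bounded_of_harmonic {p : ℕ → ℝ} {C : ℝ} (hC : ∀ n, |p n| ≤ C) (h0 : p 0 = 0)
    (h : ∀ n, p (n + 2) + p n = 2 * p (n + 1)) (n : ℕ) : p n = 0 := by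
  have hstep : ∀ n, p (n + 1) = p n + p 1 := by
    intro n
    induction n with
    | zero => simp [h0]
    | succ n ih => linarith [h n]
  have hlin : ∀ n, p n = n * p 1 := by
    intro n
    induction n with
    | zero => simp [h0]
    | succ n ih => rw [hstep, ih]; push_cast; ring
  have hp1 : p 1 = 0 := by
    by_contra hne
    obtain ⟨N, hN⟩ := exists_nat_gt (C / |p 1|)
    have hpN := hC N
    rw [hlin, abs_mul, Nat.abs_cast] at hpN
    linarith [(div_lt_iff₀ (abs_pos.2 hne)).1 hN]
  simp [hlin n, hp1]

def walk (x : ℕ → Bool) (ℓ : ℕ) : ℤ :=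
  ∑ k ∈ Finset.range ℓ, if x k then 1 else -1

lemma walk_prepend_succ (b : Bool) (y : ℕ → Bool) (ℓ : ℕ) :
    walk (prepend b y) (ℓ + 1) = (if b then 1 else -1) + walk y ℓ := by
  rw [walk, Finset.sum_range_succ', add_comm]
  rfl

lemma walk_eq_avg (x : ℕ → Bool) (ℓ : ℕ) : (walk x ℓ : ℝ) = (2 * avg x ℓ - 1) * ℓ := by
  rcases eq_or_ne ℓ 0 with rfl | hℓ
  · simp [walk]
  have hwalk : (walk x ℓ : ℝ) = ∑ k ∈ Finset.range ℓ, (2 * (if x k then (1 : ℝ) else 0) - 1) := by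
    rw [walk]
    push_cast
    exact Finset.sum_congr rfl fun k _ => by split_ifs <;> norm_num
  rw [hwalk, Finset.sum_sub_distrib, ← Finset.mul_sum, Finset.sum_const, Finset.card_range,
    nsmul_one, avg]
  field_simp

lemma measurable_walk (ℓ : ℕ) : Measurable fun x => walk x ℓ :=
  Finset.measurable_sum _ fun k _ =>
    (measurable_of_countable fun b : Bool => if b then (1 : ℤ) else -1).comp (measurable_pi_apply k)

def staysBelow (c : ℤ) : Set (ℕ → Bool) :=
  {x | ∀ ℓ, walk x ℓ < c}

lemma measurableSet_staysBelow (c : ℤ) : MeasurableSet (staysBelow c) := by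
  simp only [staysBelow, Set.ofPred_forall]
  exact .iInter fun ℓ => measurableSet_lt (measurable_walk ℓ) measurable_const

lemma prepend_mem_staysBelow {b : Bool} {y : ℕ → Bool} {c : ℤ} :
    prepend b y ∈ staysBelow c ↔ 0 < c ∧ y ∈ staysBelow (c - if b then 1 else -1) := by
  simp only [staysBelow, Set.mem_ofPred_eq]
  constructor
  · intro h
    refine ⟨by simpa [walk] using h 0, fun ℓ => ?_⟩
    linarith [walk_prepend_succ b y ℓ ▸ h (ℓ + 1)]
  · rintro ⟨hc, h⟩ (_ | ℓ)
    · simpa [walk] using hc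
    · rw [walk_prepend_succ]
      linarith [h ℓ]

lemma fairCoin_staysBelow_eq {c : ℤ} (hc : 0 < c) :
    fairCoin (staysBelow c) =
      2⁻¹ * (fairCoin (staysBelow (c + 1)) + fairCoin (staysBelow (c - 1))) := by
  have hpre (b : Bool) : prepend b ⁻¹' staysBelow c = staysBelow (c - if b then 1 else -1) :=
    Set.ext fun y => prepend_mem_staysBelow.trans (and_iff_right hc)
  conv_lhs => rw [fairCoin_eq_smul_map_prepend]
  rw [Measure.smul_apply, Measure.add_apply, smul_eq_mul,
    Measure.map_apply (measurable_prepend _) (measurableSet_staysBelow _),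
    Measure.map_apply (measurable_prepend _) (measurableSet_staysBelow _), hpre, hpre]
  simp [sub_eq_add_neg]

lemma fairCoin_staysBelow (n : ℕ) : fairCoin (staysBelow n) = 0 := by
  let p : ℕ → ℝ := fun c => fairCoin.real (staysBelow c)
  have hbdd (c : ℕ) : |p c| ≤ 1 := by
    rw [abs_of_nonneg measureReal_nonneg]
    exact measureReal_le_one
  have h0 : p 0 = 0 := by
    have : staysBelow 0 = ∅ := Set.eq_empty_of_forall_notMem fun x hx => by simpa [walk] using hx 0
    simp [p, this]
  have hharm (c : ℕ) : p (c + 2) + p c = 2 * p (c + 1) := by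
    have h := congrArg ENNReal.toReal (fairCoin_staysBelow_eq (c := (c + 1 : ℕ)) (by omega))
    simp only [ENNReal.toReal_mul, ENNReal.toReal_inv, ENNReal.toReal_ofNat,
      ENNReal.toReal_add (measure_ne_top _ _) (measure_ne_top _ _)] at h
    simp only [p, measureReal_def]
    push_cast at h ⊢
    rw [h, add_sub_cancel_right, add_assoc, one_add_one_eq_two]
    ring
  rw [← measureReal_eq_zero_iff]
  exact eq_zero_of_bounded_of_harmonic hbdd h0 hharm n

lemma ae_tendsto_avg : ∀ᵐ x ∂fairCoin, Tendsto (avg x) atTop (𝓝 (1 / 2)) := by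
  let g : Bool → ℝ := fun b => if b then 1 else 0
  have hg : Measurable g := measurable_of_countable g
  have hindep : iIndepFun (fun k (x : ℕ → Bool) => g (x k)) fairCoin :=
    iIndepFun_infinitePi fun _ => hg
  have hmap (k : ℕ) : fairCoin.map (fun x => x k) = (PMF.uniformOfFintype Bool).toMeasure :=
    Measure.infinitePi_map_eval _ k
  have hident (k : ℕ) : IdentDistrib (fun x => g (x k)) (fun x => g (x 0)) fairCoin fairCoin :=
    IdentDistrib.comp ⟨(measurable_pi_apply k).aemeasurable, (measurable_pi_apply 0).aemeasurable,
      (hmap k).trans (hmap 0).symm⟩ hg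
  have hmean : ∫ x, g (x 0) ∂fairCoin = 1 / 2 := by
    rw [← integral_map (measurable_pi_apply 0).aemeasurable hg.aestronglyMeasurable, hmap,
      PMF.integral_eq_sum]
    simp [g]
  have hint : Integrable (fun x : ℕ → Bool => g (x 0)) fairCoin :=
    .of_bound (hg.comp (measurable_pi_apply 0)).aestronglyMeasurable 1
      (ae_of_all _ fun x => by simp only [g]; split_ifs <;> simp)
  have hslln := strong_law_ae_real _ hint (fun i j hij => hindep.indepFun hij) hident
  rwa [hmean] at hslln

lemma ae_exists_forall_avg_le : ∀ᵐ x ∂fairCoin, ∃ k, 1 ≤ k ∧ ∀ ℓ, avg x ℓ ≤ avg x k := by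
  have hpos : ∀ᵐ x ∂fairCoin, ∃ ℓ, 0 < walk x ℓ := by
    refine ae_iff.2 (measure_mono_null (fun x hx => ?_) (fairCoin_staysBelow 1))
    intro ℓ
    exact Int.lt_add_one_iff.2 (not_lt.1 fun h => hx ⟨ℓ, h⟩)
  filter_upwards [ae_tendsto_avg, hpos] with x hlim ⟨ℓ, hℓ⟩
  have hhalf : 1 / 2 < avg x ℓ := by
    have h : 0 < (2 * avg x ℓ - 1) * ℓ := by rw [← walk_eq_avg]; exact_mod_cast hℓ
    linarith [pos_of_mul_pos_left h (Nat.cast_nonneg ℓ)]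
  -- extreme value theorem on the discrete space `ℕ`, whose cocompact filter is `atTop`
  obtain ⟨k, hk⟩ := continuous_of_discreteTopology.exists_forall_ge' ℓ <| by
    rw [cocompact_eq_atTop]
    exact hlim.eventually (ge_mem_nhds hhalf)
  refine ⟨k, Nat.one_le_iff_ne_zero.2 fun hk0 => ?_, hk⟩
  -- the maximiser is not `0`, where `avg x 0 = 0 / 0 = 0 < 1 / 2`
  subst hk0
  linarith [hk ℓ, (by simp [avg] : avg x 0 = 0)]

def maxAttainedBefore (m : ℕ) : Set (ℕ → Bool) :=
  {x | ∃ k, 1 ≤ k ∧ k < m ∧ ∀ ℓ, avg x ℓ ≤ avg x k}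

lemma monotone_maxAttainedBefore : Monotone maxAttainedBefore :=
  fun _ _ hm _ ⟨k, hk1, hkm, hk⟩ => ⟨k, hk1, hkm.trans_le hm, hk⟩

lemma tendsto_fairCoin_maxAttainedBefore :
    Tendsto (fun m => fairCoin (maxAttainedBefore m)) atTop (𝓝 1) := by
  have hunion : fairCoin (⋃ m, maxAttainedBefore m) = 1 := by
    rw [← measure_univ (μ := fairCoin)]
    refine measure_congr (ae_eq_univ.2 ?_)
    refine measure_mono_null (fun x hx => ?_) (ae_iff.1 ae_exists_forall_avg_le)
    rintro ⟨k, hk1, hk⟩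
    exact hx <| Set.mem_iUnion.2 ⟨k + 1, k, hk1, k.lt_succ_self, hk⟩
  exact hunion ▸ tendsto_measure_iUnion_atTop monotone_maxAttainedBefore

lemma maxAttainedBefore_subset (m : ℕ) :
    maxAttainedBefore m ⊆ {x | sSup {r : ℝ | ∃ ℓ, 1 ≤ ℓ ∧ ℓ < m ∧ r = avg x ℓ}
      = sSup {r : ℝ | ∃ ℓ, 1 ≤ ℓ ∧ r = avg x ℓ}} := by
  rintro x ⟨k, hk1, hkm, hk⟩
  have hbefore : IsGreatest {r | ∃ ℓ, 1 ≤ ℓ ∧ ℓ < m ∧ r = avg x ℓ} (avg x k) :=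
    ⟨⟨k, hk1, hkm, rfl⟩, by rintro _ ⟨ℓ, -, -, rfl⟩; exact hk ℓ⟩
  have hall : IsGreatest {r | ∃ ℓ, 1 ≤ ℓ ∧ r = avg x ℓ} (avg x k) :=
    ⟨⟨k, hk1, rfl⟩, by rintro _ ⟨ℓ, -, rfl⟩; exact hk ℓ⟩
  exact hbefore.csSup_eq.trans hall.csSup_eq.symm

/-- For each `n` there is an `m` such that, with probability greater than
`1 - 2⁻ⁿ`, the supremum of the running frequencies of `1`s is attained
already among `1 ≤ ℓ < m`. -/
theorem sup_running_frequency_attained_with_high_probability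
    (μ : Measure (ℕ → Bool))
    (hμ : ∀ σ : List Bool, μ (cyl σ) = (2⁻¹ : ℝ≥0∞) ^ σ.length) (n : ℕ) :
    ∃ m : ℕ,
      1 - (2⁻¹ : ℝ≥0∞) ^ n <
        μ {x | sSup {r : ℝ | ∃ ℓ, 1 ≤ ℓ ∧ ℓ < m ∧ r = avg x ℓ}
              = sSup {r : ℝ | ∃ ℓ, 1 ≤ ℓ ∧ r = avg x ℓ}} := by
  obtain rfl := eq_fairCoin_of_cyl hμ
  have hlt : 1 - (2⁻¹ : ℝ≥0∞) ^ n < 1 :=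
    ENNReal.sub_lt_self ENNReal.one_ne_top one_ne_zero (pow_ne_zero n (by norm_num))
  obtain ⟨m, hm⟩ :=
    (tendsto_fairCoin_maxAttainedBefore.eventually (eventually_gt_nhds hlt)).exists
  exact ⟨m, hm.trans_le (measure_mono (maxAttainedBefore_subset m))⟩
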